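/- Let I, J be intervals in a poset P such that I ∩ J is a nonempty interval. Then there exists a nonzero morphism of P-modules f : C(I) → C(J) if and only if I ∩ J is (I,J)-valid. -/

import Mathlib

open CategoryTheory
open scoped Classical ENNReal NNReal

set_option linter.unusedSectionVars false
set_option linter.unusedVariables false

/-! ## Posets, intervals, flows -/

variable {P : Type} [PartialOrder P]

/-- A subset of a poset is poset-convex if it contains every point between two of its points. -/
def PosetConvex (I : Set P) : Prop :=
  ∀ ⦃p q r : P⦄, p ∈ I → q ∈ I → p ≤ r → r ≤ q → r ∈ I

/-- A subset of a poset is poset-connected if any two of its points are joined by a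
zigzag path inside the subset. -/
def PosetConnected (I : Set P) : Prop :=
  ∀ p ∈ I, ∀ q ∈ I,
    Relation.ReflTransGen (fun a b => b ∈ I ∧ (a ≤ b ∨ b ≤ a)) p q

/-- An interval in a poset is a poset-convex and poset-connected subset. -/
def IsInterval (I : Set P) : Prop := PosetConvex I ∧ PosetConnected I

/-- `Q` is a poset-connected component of `U`: a poset-connected subset of `U`, maximal with
respect to inclusion among poset-connected subsets of `U`. -/
def IsPosetComponent (U Q : Set P) : Prop :=
  Q ⊆ U ∧ PosetConnected Q ∧
    ∀ Q' : Set P, Q' ⊆ U → PosetConnected Q' → Q ⊆ Q' → Q' = Q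

/-- A subset `Q` of `I ∩ J` is `(I,J)`-valid. -/
def IsValid (I J Q : Set P) : Prop :=
  ∀ p ∈ Q, (∀ q ∈ I, q ≤ p → q ∈ J) ∧ (∀ r ∈ J, p ≤ r → r ∈ I)

/-- An `ℝ`-flow on a poset. -/
structure RFlow (P : Type) [PartialOrder P] where
  Ω : ℝ → P → P
  mono : ∀ t : ℝ, Monotone (Ω t)
  mono_param : ∀ {t s : ℝ}, t ≤ s → ∀ p : P, Ω t p ≤ Ω s p
  add : ∀ t s : ℝ, ∀ p : P, Ω (t + s) p = Ω t (Ω s p)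
  zero : ∀ p : P, Ω 0 p = p

/-- The `t`-shift `I(t)` of a subset of a poset with an `ℝ`-flow. -/
def RFlow.shiftSet (Φ : RFlow P) (I : Set P) (t : ℝ) : Set P := {p : P | Φ.Ω t p ∈ I}

lemma RFlow.self_le (Φ : RFlow P) {t : ℝ} (ht : 0 ≤ t) (p : P) : p ≤ Φ.Ω t p := by
  have h := Φ.mono_param ht p
  rwa [Φ.zero] at h

lemma RFlow.self_le_twice (Φ : RFlow P) {t : ℝ} (ht : 0 ≤ t) (p : P) :
    p ≤ Φ.Ω t (Φ.Ω t p) :=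
  (Φ.self_le ht p).trans (Φ.self_le ht _)

lemma RFlow.omega_neg_omega (Φ : RFlow P) (t : ℝ) (p : P) : Φ.Ω (-t) (Φ.Ω t p) = p := by
  have h := Φ.add (-t) t p
  rw [neg_add_cancel, Φ.zero] at h
  exact h.symm

lemma RFlow.omega_omega_neg (Φ : RFlow P) (t : ℝ) (p : P) : Φ.Ω t (Φ.Ω (-t) p) = p := by
  have h := Φ.add t (-t) p
  rw [add_neg_cancel, Φ.zero] at h
  exact h.symm

lemma RFlow.posetConvex_shiftSet (Φ : RFlow P) {I : Set P} (hI : PosetConvex I) (t : ℝ) :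
    PosetConvex (Φ.shiftSet I t) := by
  intro p q r hp hq hpr hrq
  exact hI hp hq (Φ.mono t hpr) (Φ.mono t hrq)

lemma RFlow.posetConnected_shiftSet (Φ : RFlow P) {I : Set P} (hI : PosetConnected I) (t : ℝ) :
    PosetConnected (Φ.shiftSet I t) := by
  intro p hp q hq
  have h := hI _ hp _ hq
  have h2 := Relation.ReflTransGen.lift
    (p := fun a b : P => b ∈ Φ.shiftSet I t ∧ (a ≤ b ∨ b ≤ a)) (fun x : P => Φ.Ω (-t) x)
    (fun a b hab => ⟨show Φ.Ω t (Φ.Ω (-t) b) ∈ I by rw [Φ.omega_omega_neg]; exact hab.1,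
      hab.2.imp (fun h' => Φ.mono (-t) h') (fun h' => Φ.mono (-t) h')⟩) _ _ h
  simpa only [Function.onFun, Φ.omega_neg_omega] using h2

lemma RFlow.isInterval_shiftSet (Φ : RFlow P) {I : Set P} (hI : IsInterval I) (t : ℝ) :
    IsInterval (Φ.shiftSet I t) :=
  ⟨Φ.posetConvex_shiftSet hI.1 t, Φ.posetConnected_shiftSet hI.2 t⟩

lemma RFlow.shiftSet_nonempty (Φ : RFlow P) {I : Set P} (hI : I.Nonempty) (t : ℝ) :
    (Φ.shiftSet I t).Nonempty := by
  obtain ⟨x, hx⟩ := hI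
  exact ⟨Φ.Ω (-t) x, show Φ.Ω t (Φ.Ω (-t) x) ∈ I by rw [Φ.omega_omega_neg]; exact hx⟩

/-! ## Characteristic (interval) persistence modules -/

variable (K : Type) [Field K]

/-- The pointwise value of the characteristic module of `I`, as a submodule of `K`. -/
noncomputable def charSub (I : Set P) (p : P) : Submodule K K :=
  if p ∈ I then ⊤ else ⊥

lemma charSub_eq_top {I : Set P} {p : P} (hp : p ∈ I) : charSub K I p = ⊤ := if_pos hp

lemma charSub_eq_bot {I : Set P} {p : P} (hp : p ∉ I) : charSub K I p = ⊥ := if_neg hp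

lemma charElt_eq_zero {I : Set P} {p : P} (hp : p ∉ I) (x : ↥(charSub K I p)) : x = 0 := by
  exact Subtype.ext ((Submodule.eq_bot_iff _).mp (charSub_eq_bot K hp) (x : K) x.2)

/-- The structure maps of the characteristic module of `I`. -/
noncomputable def charMap (I : Set P) (p q : P) :
    ↥(charSub K I p) →ₗ[K] ↥(charSub K I q) :=
  if h : p ∈ I ∧ q ∈ I then
    { toFun := fun x => ⟨(x : K), by rw [charSub_eq_top K h.2]; exact Submodule.mem_top⟩
      map_add' := fun x y => rfl
      map_smul' := fun c x => rfl }
  else 0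

lemma charMap_id (I : Set P) (p : P) : charMap K I p p = LinearMap.id := by
  by_cases hp : p ∈ I
  · simp only [charMap, dif_pos (And.intro hp hp)]
    rfl
  · ext x
    rw [charElt_eq_zero K hp x]
    simp

lemma charMap_comp {I : Set P} (hI : PosetConvex I) {p q r : P} (hpq : p ≤ q) (hqr : q ≤ r) :
    (charMap K I q r).comp (charMap K I p q) = charMap K I p r := by
  by_cases hp : p ∈ I
  · by_cases hr : r ∈ I
    · have hq : q ∈ I := hI hp hr hpq hqr
      ext x
      simp only [charMap, dif_pos (And.intro hp hq), dif_pos (And.intro hq hr),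
        dif_pos (And.intro hp hr), LinearMap.comp_apply, LinearMap.coe_mk, AddHom.coe_mk]
    · ext x
      exact congrArg Subtype.val
        ((charElt_eq_zero K hr ((charMap K I q r).comp (charMap K I p q) x)).trans
          (charElt_eq_zero K hr (charMap K I p r x)).symm)
  · ext x
    rw [charElt_eq_zero K hp x]
    simp

/-- The characteristic persistence module `C(I)` of a poset-convex subset `I`. -/
noncomputable def charMod (I : Set P) (hI : PosetConvex I) : P ⥤ ModuleCat K where
  obj p := ModuleCat.of K ↥(charSub K I p)
  map {p q} h := ModuleCat.ofHom (charMap K I p q)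
  map_id p := by rw [charMap_id K I p]; rfl
  map_comp {p q r} h1 h2 := by
    rw [← ModuleCat.ofHom_comp, charMap_comp K hI (leOfHom h1) (leOfHom h2)]

/-- The zero persistence module, realized as the characteristic module of the empty interval. -/
noncomputable def zeroPMod : P ⥤ ModuleCat K :=
  charMod K (∅ : Set P) (fun _ _ _ hp _ _ _ => absurd hp (Set.notMem_empty _))

/-! ## Barcodes and interval-decomposable modules -/

/-- A barcode over a poset: a multiset of nonempty intervals, encoded as an indexed family. -/
structure Barcode (P : Type) [PartialOrder P] where
  ι : Type
  B : ι → Set P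
  interval : ∀ a : ι, IsInterval (B a)
  nonempty : ∀ a : ι, (B a).Nonempty

/-- The interval-decomposable module `⊕_{a} C(B a)` associated to a barcode. -/
noncomputable def bcMod (D : Barcode P) : P ⥤ ModuleCat K where
  obj p := ModuleCat.of K (Π₀ a : D.ι, ↥(charSub K (D.B a) p))
  map {p q} h := ModuleCat.ofHom (DFinsupp.mapRange.linearMap (fun a => charMap K (D.B a) p q))
  map_id p := by
    have h : (fun a : D.ι => charMap K (D.B a) p p)
        = fun a : D.ι => (LinearMap.id : ↥(charSub K (D.B a) p) →ₗ[K] ↥(charSub K (D.B a) p)) := by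
      funext a; exact charMap_id K (D.B a) p
    show ModuleCat.ofHom (DFinsupp.mapRange.linearMap (fun a => charMap K (D.B a) p p)) = 𝟙 _
    rw [h, DFinsupp.mapRange.linearMap_id]
    rfl
  map_comp {p q r} h1 h2 := by
    have h : (fun a : D.ι => charMap K (D.B a) p r)
        = fun a : D.ι => (charMap K (D.B a) q r).comp (charMap K (D.B a) p q) := by
      funext a
      exact (charMap_comp K (D.interval a).1 (leOfHom h1) (leOfHom h2)).symm
    show ModuleCat.ofHom (DFinsupp.mapRange.linearMap (fun a => charMap K (D.B a) p r)) = _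
    rw [h, DFinsupp.mapRange.linearMap_comp]
    rfl

/-- `M` is interval-decomposable with barcode `D`. -/
def IsDecompositionOf (D : Barcode P) (M : P ⥤ ModuleCat K) : Prop :=
  Nonempty (M ≅ bcMod K D)

/-- The shift of a barcode along a flow. -/
noncomputable def Barcode.shift (D : Barcode P) (Φ : RFlow P) (t : ℝ) : Barcode P where
  ι := D.ι
  B a := Φ.shiftSet (D.B a) t
  interval a := Φ.isInterval_shiftSet (D.interval a) t
  nonempty a := Φ.shiftSet_nonempty (D.nonempty a) t

/-! ## Shifts of modules, interleavings, distances -/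

/-- The shift `M(t)` of a persistence module along a flow. -/
noncomputable def Pshift (Φ : RFlow P) (t : ℝ) (M : P ⥤ ModuleCat K) : P ⥤ ModuleCat K :=
  (Φ.mono t).functor ⋙ M

/-- The ordered pair `(M, N)` is left `ε`-interleaved. -/
noncomputable def LeftInterleaved (Φ : RFlow P) {ε : ℝ} (hε : 0 ≤ ε)
    (M N : P ⥤ ModuleCat K) : Prop :=
  ∃ (f : M ⟶ Pshift K Φ ε N) (g : N ⟶ Pshift K Φ ε M),
    ∀ p : P, f.app p ≫ g.app (Φ.Ω ε p) = M.map (homOfLE (Φ.self_le_twice hε p))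

/-- `M` and `N` are `ε`-interleaved. -/
noncomputable def Interleaved (Φ : RFlow P) {ε : ℝ} (hε : 0 ≤ ε)
    (M N : P ⥤ ModuleCat K) : Prop :=
  ∃ (f : M ⟶ Pshift K Φ ε N) (g : N ⟶ Pshift K Φ ε M),
    (∀ p : P, f.app p ≫ g.app (Φ.Ω ε p) = M.map (homOfLE (Φ.self_le_twice hε p))) ∧
    (∀ p : P, g.app p ≫ f.app (Φ.Ω ε p) = N.map (homOfLE (Φ.self_le_twice hε p)))

/-- The interleaving distance between two persistence modules. -/
noncomputable def dI (Φ : RFlow P) (M N : P ⥤ ModuleCat K) : ℝ≥0∞ :=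
  ⨅ (ε : NNReal) (_ : Interleaved K Φ ε.coe_nonneg M N), (ε : ℝ≥0∞)

/-- An interval `I` is `t`-trivial if the transition morphism `C(I) → C(I(t))` vanishes. -/
noncomputable def IsTrivialIv (Φ : RFlow P) {t : ℝ} (ht : 0 ≤ t)
    (I : Set P) (hI : PosetConvex I) : Prop :=
  ∀ p : P, (charMod K I hI).map (homOfLE (Φ.self_le ht p)) = 0

/-- An `ε`-correspondence between two barcodes. -/
noncomputable def IsCorrespondence (Φ : RFlow P) {ε : ℝ} (hε : 0 ≤ ε)
    (DM DN : Barcode P) (σ : Set (DM.ι × DN.ι)) : Prop :=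
  (∀ ab ∈ σ, Interleaved K Φ hε
      (charMod K (DM.B ab.1) (DM.interval ab.1).1) (charMod K (DN.B ab.2) (DN.interval ab.2).1)) ∧
  (∀ a : DM.ι, (∀ b : DN.ι, (a, b) ∉ σ) →
      Interleaved K Φ hε (charMod K (DM.B a) (DM.interval a).1) (zeroPMod K)) ∧
  (∀ b : DN.ι, (∀ a : DM.ι, (a, b) ∉ σ) →
      Interleaved K Φ hε (zeroPMod K) (charMod K (DN.B b) (DN.interval b).1))

/-- An `ε`-matching between two barcodes. -/
noncomputable def IsMatching (Φ : RFlow P) {ε : ℝ} (hε : 0 ≤ ε)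
    (DM DN : Barcode P) (σ : Set (DM.ι × DN.ι)) : Prop :=
  IsCorrespondence K Φ hε DM DN σ ∧
  (∀ a b b', (a, b) ∈ σ → (a, b') ∈ σ → b = b') ∧
  (∀ a a' b, (a, b) ∈ σ → (a', b) ∈ σ → a = a')

/-- The Hausdorff distance between (modules with) barcodes `DM`, `DN`. -/
noncomputable def dH (Φ : RFlow P) (DM DN : Barcode P) : ℝ≥0∞ :=
  ⨅ (ε : NNReal) (_ : ∃ σ : Set (DM.ι × DN.ι), IsCorrespondence K Φ ε.coe_nonneg DM DN σ),
    (ε : ℝ≥0∞)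

/-- The bottleneck distance between (modules with) barcodes `DM`, `DN`. -/
noncomputable def dB (Φ : RFlow P) (DM DN : Barcode P) : ℝ≥0∞ :=
  ⨅ (ε : NNReal) (_ : ∃ σ : Set (DM.ι × DN.ι), IsMatching K Φ ε.coe_nonneg DM DN σ),
    (ε : ℝ≥0∞)


/-!
A morphism `f : C(I) → C(J)` is determined by the scalars `c_p = f_p(1)`, `p ∈ I ∩ J`.
Naturality makes `c` constant along comparable pairs of `I ∩ J`, hence constant on the
poset-connected set `I ∩ J`, and forces `c_p = 0` as soon as `p` lies above a point of `I \ J` or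
below a point of `J \ I`; so a nonzero `f` makes `I ∩ J` valid. Conversely, validity is exactly
what makes the identity on `I ∩ J`, extended by zero, a natural transformation.
-/

lemma PosetConnected.eq_of_forall_le_imp_eq {α : Type*} {Q : Set P} (hQ : PosetConnected Q)
    {g : P → α} (hg : ∀ p ∈ Q, ∀ q ∈ Q, p ≤ q → g p = g q) {p q : P} (hp : p ∈ Q)
    (hq : q ∈ Q) : g p = g q := by
  suffices ∀ c, Relation.ReflTransGen (fun a b => b ∈ Q ∧ (a ≤ b ∨ b ≤ a)) p c →
      c ∈ Q ∧ g p = g c from (this q (hQ p hp q hq)).2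
  intro c hc
  induction hc with
  | refl => exact ⟨hp, rfl⟩
  | tail _ hbc ih =>
    refine ⟨hbc.1, ih.2.trans ?_⟩
    rcases hbc.2 with h | h
    · exact hg _ ih.1 _ hbc.1 h
    · exact (hg _ hbc.1 _ ih.1 h).symm

lemma IsValid.mem_inter_iff {I J : Set P} (hv : IsValid I J (I ∩ J)) {p q : P} (hp : p ∈ I)
    (hq : q ∈ J) (h : p ≤ q) : p ∈ I ∩ J ↔ q ∈ I ∩ J :=
  ⟨fun hpIJ => ⟨(hv p hpIJ).2 q hq h, hq⟩, fun hqIJ => ⟨hp, (hv q hqIJ).1 p hp h⟩⟩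

noncomputable def charOne {I : Set P} {p : P} (hp : p ∈ I) : ↥(charSub K I p) :=
  ⟨1, by rw [charSub_eq_top K hp]; trivial⟩

lemma coe_smul_charOne {I : Set P} {p : P} (hp : p ∈ I) (x : ↥(charSub K I p)) :
    (x : K) • charOne K hp = x :=
  Subtype.ext (mul_one (x : K))

lemma charMap_apply_coe {I : Set P} {p q : P} (hp : p ∈ I) (hq : q ∈ I)
    (x : ↥(charSub K I p)) : (charMap K I p q x : K) = x := by
  simp only [charMap, dif_pos (And.intro hp hq)]
  rfl

lemma charMap_charOne {I : Set P} {p q : P} (hp : p ∈ I) (hq : q ∈ I) :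
    charMap K I p q (charOne K hp) = charOne K hq :=
  Subtype.ext (charMap_apply_coe K hp hq _)

lemma charMap_eq_zero {I : Set P} {p q : P} (h : ¬(p ∈ I ∧ q ∈ I)) : charMap K I p q = 0 :=
  dif_neg h

section Morphisms

variable {K} {I J : Set P} {hI : PosetConvex I} {hJ : PosetConvex J}
  (f : charMod K I hI ⟶ charMod K J hJ)

/-- `f.app p` with its source and target unfolded to `charSub`, so that it can be rewritten with
the lemmas about `charMap`. -/
noncomputable def charHomApp (p : P) : ↥(charSub K I p) →ₗ[K] ↥(charSub K J p) :=
  (f.app p).hom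

lemma charHomApp_naturality {p q : P} (h : p ≤ q) (x : ↥(charSub K I p)) :
    charHomApp f q (charMap K I p q x) = charMap K J p q (charHomApp f p x) :=
  congrArg (fun m => ModuleCat.Hom.hom m x) (f.naturality (homOfLE h))

lemma exists_charHomApp_ne_zero (hf : f ≠ 0) : ∃ p, charHomApp f p ≠ 0 := by
  by_contra! hzero
  exact hf (NatTrans.ext (funext fun p => ModuleCat.hom_ext (hzero p)))

/-- The scalar `f_p(1)` by which `f` acts at `p`; junk value `0` off `I`. -/
noncomputable def charCoeff (p : P) : K :=
  if hp : p ∈ I then (charHomApp f p (charOne K hp) : K) else 0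

lemma charCoeff_of_mem {p : P} (hp : p ∈ I) :
    charCoeff f p = (charHomApp f p (charOne K hp) : K) :=
  dif_pos hp

lemma mem_inter_of_charHomApp_ne_zero {p : P} (h : charHomApp f p ≠ 0) : p ∈ I ∩ J := by
  by_contra hp
  refine h (LinearMap.ext fun x => ?_)
  rcases not_and_or.mp hp with hpI | hpJ
  · rw [charElt_eq_zero K hpI x, map_zero, map_zero]
  · exact charElt_eq_zero K hpJ _

lemma charCoeff_ne_zero_of_charHomApp_ne_zero {p : P} (h : charHomApp f p ≠ 0) :
    charCoeff f p ≠ 0 := by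
  have hp := mem_inter_of_charHomApp_ne_zero f h
  rw [charCoeff_of_mem f hp.1]
  intro h0
  have hone : charHomApp f p (charOne K hp.1) = 0 := Subtype.ext h0
  refine h (LinearMap.ext fun x => ?_)
  rw [← coe_smul_charOne K hp.1 x, map_smul, hone, smul_zero, LinearMap.zero_apply]

lemma charCoeff_eq_of_le {p q : P} (hp : p ∈ I ∩ J) (hq : q ∈ I ∩ J) (h : p ≤ q) :
    charCoeff f p = charCoeff f q := by
  have key := congrArg Subtype.val (charHomApp_naturality f h (charOne K hp.1))
  rw [charMap_charOne K hp.1 hq.1, charMap_apply_coe K hp.2 hq.2] at key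
  rw [charCoeff_of_mem f hp.1, charCoeff_of_mem f hq.1, key]

lemma charCoeff_eq_zero_of_le_mem_diff {p q : P} (hp : p ∈ I) (hq : q ∈ I \ J) (h : q ≤ p) :
    charCoeff f p = 0 := by
  have key := charHomApp_naturality f h (charOne K hq.1)
  rw [charMap_charOne K hq.1 hp, charMap_eq_zero K (fun hqp => hq.2 hqp.1),
    LinearMap.zero_apply] at key
  rw [charCoeff_of_mem f hp, key]
  rfl

lemma charCoeff_eq_zero_of_ge_mem_diff {p r : P} (hp : p ∈ I ∩ J) (hr : r ∈ J \ I)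
    (h : p ≤ r) : charCoeff f p = 0 := by
  have key := congrArg Subtype.val (charHomApp_naturality f h (charOne K hp.1))
  rw [charMap_eq_zero K (fun hpr => hr.2 hpr.2), LinearMap.zero_apply, map_zero,
    charMap_apply_coe K hp.2 hr.1] at key
  rw [charCoeff_of_mem f hp.1, ← key]
  rfl

lemma isValid_of_ne_zero (hc : PosetConnected (I ∩ J)) (hf : f ≠ 0) : IsValid I J (I ∩ J) := by
  obtain ⟨p₀, hp₀⟩ := exists_charHomApp_ne_zero f hf
  have hcoeff : ∀ p ∈ I ∩ J, charCoeff f p ≠ 0 := fun p hp => by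
    rw [← hc.eq_of_forall_le_imp_eq (fun _ ha _ hb => charCoeff_eq_of_le f ha hb)
      (mem_inter_of_charHomApp_ne_zero f hp₀) hp]
    exact charCoeff_ne_zero_of_charHomApp_ne_zero f hp₀
  refine fun p hp => ⟨fun q hqI hqp => ?_, fun r hrJ hpr => ?_⟩
  · by_contra hqJ
    exact hcoeff p hp (charCoeff_eq_zero_of_le_mem_diff f hp.1 ⟨hqI, hqJ⟩ hqp)
  · by_contra hrI
    exact hcoeff p hp (charCoeff_eq_zero_of_ge_mem_diff f hp ⟨hrJ, hrI⟩ hpr)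

end Morphisms

noncomputable def charCrossMap (I J : Set P) (p : P) :
    ↥(charSub K I p) →ₗ[K] ↥(charSub K J p) :=
  if h : p ∈ I ∩ J then
    { toFun := fun x => ⟨(x : K), by rw [charSub_eq_top K h.2]; trivial⟩
      map_add' := fun _ _ => rfl
      map_smul' := fun _ _ => rfl }
  else 0

lemma charCrossMap_apply_coe {I J : Set P} {p : P} (h : p ∈ I ∩ J) (x : ↥(charSub K I p)) :
    (charCrossMap K I J p x : K) = x := by
  simp only [charCrossMap, dif_pos h]
  rfl

lemma charCrossMap_eq_zero {I J : Set P} {p : P} (h : p ∉ I ∩ J) : charCrossMap K I J p = 0 :=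
  dif_neg h

lemma charCrossMap_naturality {I J : Set P} (hv : IsValid I J (I ∩ J)) {p q : P} (h : p ≤ q) :
    (charCrossMap K I J q).comp (charMap K I p q)
      = (charMap K J p q).comp (charCrossMap K I J p) := by
  refine LinearMap.ext fun x => ?_
  by_cases hp : p ∈ I
  swap
  · rw [charElt_eq_zero K hp x, map_zero, map_zero]
  by_cases hq : q ∈ J
  swap
  · exact (charElt_eq_zero K hq _).trans (charElt_eq_zero K hq _).symm
  by_cases hpIJ : p ∈ I ∩ J
  · have hqIJ := (hv.mem_inter_iff hp hq h).1 hpIJ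
    refine Subtype.ext ?_
    simp only [LinearMap.comp_apply]
    rw [charCrossMap_apply_coe K hqIJ, charMap_apply_coe K hp hqIJ.1,
      charMap_apply_coe K hpIJ.2 hq, charCrossMap_apply_coe K hpIJ]
  · have hqIJ := mt (hv.mem_inter_iff hp hq h).2 hpIJ
    simp [charCrossMap_eq_zero K hpIJ, charCrossMap_eq_zero K hqIJ]

noncomputable def charHomOfIsValid {I J : Set P} (hI : PosetConvex I) (hJ : PosetConvex J)
    (hv : IsValid I J (I ∩ J)) : charMod K I hI ⟶ charMod K J hJ where
  app p := ModuleCat.ofHom (charCrossMap K I J p)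
  naturality _ _ h := ModuleCat.hom_ext (charCrossMap_naturality K hv (leOfHom h))

lemma charHomOfIsValid_ne_zero {I J : Set P} (hI : PosetConvex I) (hJ : PosetConvex J)
    (hv : IsValid I J (I ∩ J)) (hne : (I ∩ J).Nonempty) : charHomOfIsValid K hI hJ hv ≠ 0 := by
  obtain ⟨p, hp⟩ := hne
  intro h0
  have key := congrArg (fun g => Subtype.val (charHomApp g p (charOne K hp.1))) h0
  exact one_ne_zero ((charCrossMap_apply_coe K hp _).symm.trans key)

/-- if `I ∩ J` is a nonempty interval, then a nonzero morphism
`C(I) → C(J)` exists iff `I ∩ J` is `(I,J)`-valid. -/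
theorem nonzero_morphism_iff_valid (I J : Set P) (hI : IsInterval I) (hJ : IsInterval J)
    (hIJ : IsInterval (I ∩ J)) (hne : (I ∩ J).Nonempty) :
    (∃ f : charMod K I hI.1 ⟶ charMod K J hJ.1, f ≠ 0) ↔ IsValid I J (I ∩ J) :=
  ⟨fun ⟨f, hf⟩ => isValid_of_ne_zero f hIJ.2 hf,
    fun hv => ⟨charHomOfIsValid K hI.1 hJ.1 hv, charHomOfIsValid_ne_zero K hI.1 hJ.1 hv hne⟩⟩
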